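/- arXiv:1907.07628 — 4 statements merged into one kernel-verified Lean document; each statement's English description precedes it below -/
import Mathlib

section
/- Suppose e(z*) - e(x) ≤ (1+l)w < e(z*) - e(y*), with piecewise linear cost. Then the compromising price of x is p^comp = (u(x) + l·v(x))/(1+l) + ((k-l)/((1+k)(1+l)))·e(z*) - (k/(1+k))·e(y*) - ((k-l)/(1+k))·w. -/
/-!
Write `d = v(z*) - p(z*) - v(x) + p` for the argument of the cost `φ` in the price equation.
On the upper branch `d > w` the equation forces `(1 + k)(d - w) = e(z*) - e(x) - (1 + l) w ≤ 0`,
a contradiction; so the lower branch applies, the equation becomes linear in `p`, and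
substituting `p(z*)` gives the closed form.
-/

/-- The cost `φ` of the paper. -/
noncomputable def kinkedCost (k l w t : ℝ) : ℝ :=
  if t ≤ w then l * t else k * (t - w) + l * w

theorem kinkedCost_of_le {k l w t : ℝ} (ht : t ≤ w) : kinkedCost k l w t = l * t :=
  if_pos ht

theorem kinkedCost_of_lt {k l w t : ℝ} (ht : w < t) :
    kinkedCost k l w t = k * (t - w) + l * w :=
  if_neg ht.not_ge

theorem le_of_eq_sub_kinkedCost {k l w a b p : ℝ} (hk : 0 < 1 + k) (hab : a + b ≤ (1 + l) * w)
    (hp : p = a - kinkedCost k l w (b + p)) : b + p ≤ w := by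
  by_contra! hlt
  rw [kinkedCost_of_lt hlt] at hp
  have hkink : (1 + k) * (b + p - w) = a + b - (1 + l) * w := by linear_combination hp
  nlinarith

theorem eq_of_eq_sub_kinkedCost {k l w a b p : ℝ} (hk : 0 < 1 + k) (hl : 0 < 1 + l)
    (hab : a + b ≤ (1 + l) * w) (hp : p = a - kinkedCost k l w (b + p)) :
    p = (a - l * b) / (1 + l) := by
  rw [kinkedCost_of_le (le_of_eq_sub_kinkedCost hk hab hp)] at hp
  rw [eq_div_iff hl.ne']
  linear_combination hp

theorem stmt_7_general (k l w : ℝ) (hk : 1 < k) (hl0 : 0 < l)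
    (ux vx uz vz ey p : ℝ)
    (hzx : (vz - uz) - (vx - ux) ≤ (1 + l) * w)
    (pz : ℝ) (hpz : pz = (uz + k * (vz - ey - w) + l * w) / (1 + k))
    (hp : p = ux + pz - uz -
      (if vz - pz - vx + p ≤ w then l * (vz - pz - vx + p)
        else k * (vz - pz - vx + p - w) + l * w)) :
    p = (ux + l * vx) / (1 + l)
        + ((k - l) / ((1 + k) * (1 + l))) * (vz - uz)
        - (k / (1 + k)) * ey - ((k - l) / (1 + k)) * w := by
  have hk' : 0 < 1 + k := by linarith
  have hl' : 0 < 1 + l := by linarith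
  have hlinear : p = (ux + pz - uz - l * (vz - pz - vx)) / (1 + l) :=
    eq_of_eq_sub_kinkedCost hk' hl' (by linarith) hp
  rw [hlinear, hpz]
  field_simp
  ring

/-- Lower-branch solution of the compromising price equation. -/
theorem stmt_7 (k l w : ℝ) (hk : 1 < k) (hl1 : l < 1) (hl0 : 0 < l)
    (hw : 0 ≤ w) (ux vx uz vz ey p : ℝ)
    (hzx : (vz - uz) - (vx - ux) ≤ (1 + l) * w)
    (hzy : (1 + l) * w < (vz - uz) - ey)
    (pz : ℝ) (hpz : pz = (uz + k * (vz - ey - w) + l * w) / (1 + k))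
    (hp : p = ux + pz - uz -
      (if vz - pz - vx + p ≤ w then l * (vz - pz - vx + p)
        else k * (vz - pz - vx + p - w) + l * w)) :
    p = (ux + l * vx) / (1 + l)
        + ((k - l) / ((1 + k) * (1 + l))) * (vz - uz)
        - (k / (1 + k)) * ey - ((k - l) / (1 + k)) * w :=
  stmt_7_general k l w hk hl0 ux vx uz vz ey p hzx pz hpz hp
end

section
/- If e(z*) - e(y*) ≤ (1+l)w (so e(x) - e(y*) ≤ (1+l)w for any x with e(x) ≤ e(z*)), then the optimal compromising price of x equals the optimal indulging price of x, namely both equal (u(x) + l(v(x) - e(y*)))/(1+l). -/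
/-!
The cost `φ` has slope `l` up to the kink `w` and slope `k > -1` beyond it, so `t ↦ t + φ t`
is strictly increasing and equals `(1 + l) w` at the kink. Each of the three pricing equations
has the form `t + φ t = D` for its own argument `t`, with `D` equal to `e(z*) - e(y*)`,
`e(x) - e(y*)` or `e(z*) - e(x)`; all three lie in `[0, (1 + l) w]`, so every argument stays on
the linear piece, where the equations become linear and solve to the stated price.
-/

/-- The piecewise linear cost `φ` of the paper. -/
noncomputable def kinkCost (k l w t : ℝ) : ℝ :=
  if t ≤ w then l * t else k * (t - w) + l * w

lemma kinkCost_eq_of_add_le {k l w t : ℝ} (hk : -1 < k)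
    (h : t + kinkCost k l w t ≤ (1 + l) * w) : kinkCost k l w t = l * t := by
  unfold kinkCost at h ⊢
  split_ifs at h ⊢ with ht
  · rfl
  · have : 0 < (1 + k) * (t - w) := mul_pos (by linarith) (by linarith)
    linarith

theorem stmt_8_general (k l w : ℝ) (hk : 1 < k) (hl0 : 0 < l)
    (ux vx uz vz ey pz pind pcomp : ℝ)
    (hord1 : ey ≤ vx - ux) (hord2 : vx - ux ≤ vz - uz)
    (hzy : (vz - uz) - ey ≤ (1 + l) * w)
    (hpz : pz = uz + (if vz - pz - ey ≤ w then l * (vz - pz - ey)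
        else k * (vz - pz - ey - w) + l * w))
    (hind : pind = ux + (if vx - pind - ey ≤ w then l * (vx - pind - ey)
        else k * (vx - pind - ey - w) + l * w))
    (hcomp : pcomp = ux + pz - uz -
      (if vz - pz - vx + pcomp ≤ w then l * (vz - pz - vx + pcomp)
        else k * (vz - pz - vx + pcomp - w) + l * w)) :
    pcomp = (ux + l * (vx - ey)) / (1 + l) ∧
      pind = (ux + l * (vx - ey)) / (1 + l) := by
  change pz = uz + kinkCost k l w (vz - pz - ey) at hpz
  change pind = ux + kinkCost k l w (vx - pind - ey) at hind
  change pcomp = ux + pz - uz - kinkCost k l w (vz - pz - vx + pcomp) at hcomp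
  have hk' : -1 < k := by linarith
  have hz := kinkCost_eq_of_add_le (l := l) (w := w) (t := vz - pz - ey) hk' (by linarith)
  have hx := kinkCost_eq_of_add_le (l := l) (w := w) (t := vx - pind - ey) hk' (by linarith)
  have hc := kinkCost_eq_of_add_le (l := l) (w := w) (t := vz - pz - vx + pcomp) hk' (by linarith)
  have hl : 1 + l ≠ 0 := by positivity
  constructor <;> rw [eq_div_iff hl]
  · linear_combination hcomp - hc + hpz + hz
  · linear_combination hind + hx

/-- When `e(z*) - e(y*) ≤ (1+l)w`, the compromising and indulging prices
of `x` coincide and equal `(u(x) + l(v(x) - e(y*)))/(1+l)`. -/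
theorem stmt_8 (k l w : ℝ) (hk : 1 < k) (hl1 : l < 1) (hl0 : 0 < l)
    (hw : 0 ≤ w) (ux vx uz vz ey pz pind pcomp : ℝ)
    (hord1 : ey ≤ vx - ux) (hord2 : vx - ux ≤ vz - uz)
    (hzy : (vz - uz) - ey ≤ (1 + l) * w)
    (hpz : pz = uz + (if vz - pz - ey ≤ w then l * (vz - pz - ey)
        else k * (vz - pz - ey - w) + l * w))
    (hind : pind = ux + (if vx - pind - ey ≤ w then l * (vx - pind - ey)
        else k * (vx - pind - ey - w) + l * w))
    (hcomp : pcomp = ux + pz - uz -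
      (if vz - pz - vx + pcomp ≤ w then l * (vz - pz - vx + pcomp)
        else k * (vz - pz - vx + pcomp - w) + l * w)) :
    pcomp = (ux + l * (vx - ey)) / (1 + l) ∧
      pind = (ux + l * (vx - ey)) / (1 + l) :=
  stmt_8_general k l w hk hl0 ux vx uz vz ey pz pind pcomp hord1 hord2 hzy hpz hind hcomp
end

section
/- If the per-unit self-control cost is strictly convex, then for any alternative x with e(y*) < e(x) < e(z*), the compromising price p^comp defined implicitly by p^comp = u(x) + p(z*) - u(z*) - φ(v(z*) - p(z*) - v(x) + p^comp) strictly exceeds the indulging price p^ind defined by p^ind = u(x) + φ(v(x) - p^ind - e(y*)), where p(z*) solves p(z*) = u(z*) + φ(v(z*) - p(z*) - e(y*)). Here assume all solutions exist with nonnegative arguments of φ. -/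
/-!
Write `A = v(z*) - p(z*) - e(y*)`, `B = v(x) - p^ind - e(y*)` and
`C = v(z*) - p(z*) - v(x) + p^comp` for the arguments of `φ`. The pricing equations say `e(z*) = e(y*) + A + φ A` and
`e(x) = e(y*) + B + φ B`; since `t ↦ t + φ t` is strictly increasing, `e(y*) < e(x) < e(z*)`
gives `0 < B < A`. Moreover `C = A - B + (p^comp - p^ind)` and
`φ C = φ A - φ B - (p^comp - p^ind)`. If `p^comp ≤ p^ind`, then `C ≤ A - B`, so
`φ C ≤ φ (A - B) < φ A - φ B ≤ φ C` by strict superadditivity of `φ`, a contradiction.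
-/

open Set

theorem StrictConvexOn.mul_lt_mul_of_map_zero_nonpos {𝕜 : Type*} [Field 𝕜] [LinearOrder 𝕜]
    [IsStrictOrderedRing 𝕜] {f : 𝕜 → 𝕜} (hf : StrictConvexOn 𝕜 (Ici 0) f) (h0 : f 0 ≤ 0)
    {t s : 𝕜} (ht : 0 < t) (hts : t < s) : f t * s < t * f s := by
  have hs : 0 < s := ht.trans hts
  have hslope := hf.secant_strict_mono self_mem_Ici ht.le hs.le ht.ne' hs.ne' hts
  rw [sub_zero, sub_zero, div_lt_div_iff₀ ht hs] at hslope
  linarith [mul_nonpos_of_nonpos_of_nonneg h0 (sub_nonneg.2 hts.le)]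

theorem StrictConvexOn.add_lt_map_add {𝕜 : Type*} [Field 𝕜] [LinearOrder 𝕜]
    [IsStrictOrderedRing 𝕜] {f : 𝕜 → 𝕜} (hf : StrictConvexOn 𝕜 (Ici 0) f) (h0 : f 0 ≤ 0)
    {b c : 𝕜} (hb : 0 < b) (hc : 0 < c) : f b + f c < f (b + c) := by
  have hbc : 0 < b + c := add_pos hb hc
  have h₁ := hf.mul_lt_mul_of_map_zero_nonpos h0 hb (lt_add_of_pos_right b hc)
  have h₂ := hf.mul_lt_mul_of_map_zero_nonpos h0 hc (lt_add_of_pos_left c hb)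
  refine lt_of_mul_lt_mul_right ?_ hbc.le
  linarith

theorem stmt_11_general (φ : ℝ → ℝ)
    (hconv : StrictConvexOn ℝ (Set.Ici (0:ℝ)) φ)
    (hmono : StrictMonoOn φ (Set.Ici (0:ℝ)))
    (hφ0 : φ 0 = 0)
    (ux vx uz vz ey pz pind pcomp : ℝ)
    (hyx : ey < vx - ux) (hxz : vx - ux < vz - uz)
    (hpz_nn : 0 ≤ vz - pz - ey)
    (hind_nn : 0 ≤ vx - pind - ey)
    (hcomp_nn : 0 ≤ vz - pz - vx + pcomp)
    (hpz : pz = uz + φ (vz - pz - ey))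
    (hind : pind = ux + φ (vx - pind - ey))
    (hcomp : pcomp = ux + pz - uz - φ (vz - pz - vx + pcomp)) :
    pcomp > pind := by
  set A := vz - pz - ey
  set B := vx - pind - ey
  set C := vz - pz - vx + pcomp
  have hg : StrictMonoOn (fun t => t + φ t) (Ici 0) := strictMonoOn_id.add hmono
  have hB : 0 < B := (hg.lt_iff_lt self_mem_Ici hind_nn).mp (by linarith)
  have hBA : B < A := (hg.lt_iff_lt hind_nn hpz_nn).mp (by linarith)
  have hsuper : φ B + φ (A - B) < φ A := by
    simpa using hconv.add_lt_map_add hφ0.le hB (sub_pos.2 hBA)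
  by_contra hle
  have hφC : φ C ≤ φ (A - B) := hmono.monotoneOn hcomp_nn (sub_pos.2 hBA).le (by linarith)
  linarith

/-- For a strictly convex self-control cost, the compromising price
strictly exceeds the indulging price whenever `e(y*) < e(x) < e(z*)`. -/
theorem stmt_11 (φ : ℝ → ℝ)
    (hconv : StrictConvexOn ℝ (Set.Ici (0:ℝ)) φ)
    (hcont : ContinuousOn φ (Set.Ici (0:ℝ)))
    (hmono : StrictMonoOn φ (Set.Ici (0:ℝ)))
    (hφ0 : φ 0 = 0)
    (ux vx uz vz ey pz pind pcomp : ℝ)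
    (hyx : ey < vx - ux) (hxz : vx - ux < vz - uz)
    (hpz_nn : 0 ≤ vz - pz - ey)
    (hind_nn : 0 ≤ vx - pind - ey)
    (hcomp_nn : 0 ≤ vz - pz - vx + pcomp)
    (hpz : pz = uz + φ (vz - pz - ey))
    (hind : pind = ux + φ (vx - pind - ey))
    (hcomp : pcomp = ux + pz - uz - φ (vz - pz - vx + pcomp)) :
    pcomp > pind :=
  stmt_11_general φ hconv hmono hφ0 ux vx uz vz ey pz pind pcomp hyx hxz hpz_nn hind_nn hcomp_nn hpz
    hind hcomp
end

section
/- In the piecewise linear model, the consumer's welfare under the optimal contract (equal to u(sold) - price of sold alternative) is weakly increasing in the willpower parameter w: for w ∈ [ (e(z*)-e(x_l))/(1+l), (e(z*)-e(y*))/(1+l) ), welfare equals u(x_l) - p^comp(x_l, w) where p^comp(x_l, w) = (u(x_l)+l v(x_l))/(1+l) + ((k-l)/((1+k)(1+l)))e(z*) - (k/(1+k))e(y*) - ((k-l)/(1+k))w, which is strictly increasing in w; and for w ≥ (e(z*)-e(y*))/(1+l) welfare equals u(x_l) - (u(x_l)+l(v(x_l)-e(y*)))/(1+l), which is constant in w and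 continuous at the boundary w = (e(z*)-e(y*))/(1+l). -/
/-!
Both prices are affine in `w`, and they meet at the boundary `b`: the compromise price equals
the indulgence price plus `(k - l)/(1 + k) * (b - w)`. Hence welfare is
`(u(x_l) - p^ind) + (k - l)/(1 + k) * min (w - b) 0`, a continuous nondecreasing kink function
whose slope `(k - l)/(1 + k)` is positive below `b` and zero above it.
-/

lemma ite_lt_sub_mul_eq_add_mul_min (q c b w : ℝ) :
    (if w < b then q - c * (b - w) else q) = q + c * min (w - b) 0 := by
  split_ifs with h
  · rw [min_eq_left (by linarith)]
    ring
  · rw [min_eq_right (by linarith)]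
    ring

lemma monotone_add_mul_min_sub {c : ℝ} (hc : 0 ≤ c) (q b : ℝ) :
    Monotone fun w : ℝ => q + c * min (w - b) 0 := fun x y hxy => by
  dsimp only
  gcongr

lemma compromisePrice_eq_indulgencePrice_add {k l : ℝ} (hk : 1 + k ≠ 0) (hl : 1 + l ≠ 0)
    (uxl vxl ez ey w : ℝ) :
    (uxl + l * vxl) / (1 + l) + ((k - l) / ((1 + k) * (1 + l))) * ez
        - (k / (1 + k)) * ey - ((k - l) / (1 + k)) * w =
      (uxl + l * (vxl - ey)) / (1 + l) + ((k - l) / (1 + k)) * ((ez - ey) / (1 + l) - w) := by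
  field_simp
  ring

theorem stmt_19_general (k l : ℝ) (hk : 1 < k) (hl1 : l < 1) (hl0 : 0 < l)
    (uxl vxl ez ey : ℝ) :
    let a : ℝ := (ez - (vxl - uxl)) / (1 + l)
    let b : ℝ := (ez - ey) / (1 + l)
    let pcomp : ℝ → ℝ := fun w => (uxl + l * vxl) / (1 + l)
      + ((k - l) / ((1 + k) * (1 + l))) * ez
      - (k / (1 + k)) * ey - ((k - l) / (1 + k)) * w
    let pind : ℝ := (uxl + l * (vxl - ey)) / (1 + l)
    let W : ℝ → ℝ := fun w => if w < b then uxl - pcomp w else uxl - pind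
    StrictMonoOn (fun w => uxl - pcomp w) (Set.Ico a b) ∧
    (∀ w, b ≤ w → W w = uxl - pind) ∧
    MonotoneOn W (Set.Ici a) ∧
    ContinuousAt W b := by
  intro a b pcomp pind W
  have hc : 0 < (k - l) / (1 + k) := div_pos (by linarith) (by linarith)
  have hpcomp (w : ℝ) : pcomp w = pind + (k - l) / (1 + k) * (b - w) :=
    compromisePrice_eq_indulgencePrice_add (by linarith) (by linarith) uxl vxl ez ey w
  have hW : W = fun w => (uxl - pind) + (k - l) / (1 + k) * min (w - b) 0 := by
    funext w
    simp only [W, hpcomp, sub_add_eq_sub_sub, ite_lt_sub_mul_eq_add_mul_min]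
  refine ⟨?_, fun w hw => if_neg (not_lt.mpr hw), ?_, ?_⟩
  · intro x _ y _ hxy
    simp only [hpcomp]
    gcongr
  · rw [hW]
    exact (monotone_add_mul_min_sub hc.le _ _).monotoneOn _
  · rw [hW]
    fun_prop

/-- Consumer welfare under the optimal contract is weakly increasing in
the willpower `w`: strictly increasing on the compromising range,
constant on the indulging range, and continuous at the boundary. -/
theorem stmt_19 (k l : ℝ) (hk : 1 < k) (hl1 : l < 1) (hl0 : 0 < l)
    (uxl vxl ez ey : ℝ) (hyx : ey < vxl - uxl) (hxz : vxl - uxl < ez) :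
    let a : ℝ := (ez - (vxl - uxl)) / (1 + l)
    let b : ℝ := (ez - ey) / (1 + l)
    let pcomp : ℝ → ℝ := fun w => (uxl + l * vxl) / (1 + l)
      + ((k - l) / ((1 + k) * (1 + l))) * ez
      - (k / (1 + k)) * ey - ((k - l) / (1 + k)) * w
    let pind : ℝ := (uxl + l * (vxl - ey)) / (1 + l)
    let W : ℝ → ℝ := fun w => if w < b then uxl - pcomp w else uxl - pind
    StrictMonoOn (fun w => uxl - pcomp w) (Set.Ico a b) ∧
    (∀ w, b ≤ w → W w = uxl - pind) ∧
    MonotoneOn W (Set.Ici a) ∧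
    ContinuousAt W b :=
  stmt_19_general k l hk hl1 hl0 uxl vxl ez ey
end
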